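/- arXiv:2405.06689 — 4 statements merged into one kernel-verified Lean document; each statement's English description precedes it below -/
import Mathlib

section
/- Consider an SSG. For v = (v_A, v_B) with v_A, v_B : S → ℝ, define for each state s and each distribution f_s on A: R_B(s, f_s, v_B) := argmax_{b∈B} [ r_B(s,f_s,b) + γ_B Σ_{s'} p(s'|s,f_s,b) v_B(s') ], assumed to be a singleton for all s, f_s, v_B, and R_A(s, v) := argmax_{f_s ∈ Δ(A)} [ r_A(s,f_s,R_B(s,f_s,v_B)) + γ_A Σ_{s'} p(s'|s,f_s,R_B(s,f_s,v_B)) v_A(s') ], assumed to be nonempty for all s, v. Define the one-step Stackelberg operator T by (Tv)_i(s) := r_i(s, f_s^*, b_s^*) + γ_i Σ_{s'} p(s'|s, f_s^*, b_s^*) v_i(s') for i ∈ {A,B}, where f_s^* ∈ R_A(s,v) and b_s^* = R_B(s, f_s^*, v_B). Let R_A(V) denote a leader policy whose action distribution at each s lies in R_A(s,V), and for a leader policy f let R_B(f, V_B) denote the deterministic follower policy s ↦ R_B(s, f(s), V_B). Then: if V = (V_A, V_B) satisfies (TV)_i(s) = V_i(s) for all i ∈ {A,B} and all s ∈ S, it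 holds that V_A(s) = max over all leader policies f of V_A^{f R_B(f, V_B)}(s) for all s ∈ S, and V_B(s) = max over all follower policies g of V_B^{R_A(V) g}(s) for all s ∈ S (both maxima being attained). -/
open Finset

/-- A probability distribution on a finite type, represented as a function. -/
def IsDist {α : Type*} [Fintype α] (d : α → ℝ) : Prop :=
  (∀ x, 0 ≤ d x) ∧ ∑ x, d x = 1

/-- A (stationary stochastic) policy: a distribution over actions at each state. -/
def IsPol {S α : Type*} [Fintype α] (f : S → α → ℝ) : Prop :=
  ∀ s, IsDist (f s)

/-- A deterministic policy viewed as a stochastic one. -/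
noncomputable def det {S α : Type*} [DecidableEq α] (g : S → α) : S → α → ℝ :=
  fun s a => if a = g s then 1 else 0

/-- `V` is the value function of the policy pair `(f, g)` for reward `r`,
discount `γ` and transition kernel `p`, i.e. `V` satisfies the Bellman
expectation equation (whose solution is unique since `γ < 1`). -/
def IsValue {S A B : Type*} [Fintype S] [Fintype A] [Fintype B]
    (p : S → A → B → S → ℝ) (r : S → A → B → ℝ) (γ : ℝ)
    (f : S → A → ℝ) (g : S → B → ℝ) (V : S → ℝ) : Prop :=
  ∀ s, V s = ∑ a, ∑ b, f s a * g s b * (r s a b + γ * ∑ s', p s a b s' * V s')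

/-- Weak dominance `v ≽ w`. -/
def DomGE {S : Type*} (v w : S → ℝ) : Prop := ∀ s, w s ≤ v s

/-- Strict dominance `v ≻ w`. -/
def SDom {S : Type*} (v w : S → ℝ) : Prop := DomGE v w ∧ v ≠ w

/-- A two-player stochastic Stackelberg game together with its value functions:
finite state/action spaces, transition kernel, bounded rewards, discount rates
in `[0,1)`, and for every pair of (stochastic) policies the associated value
functions `VA`, `VB`, characterized as the (unique) solutions of the Bellman
expectation equations. -/
structure SSGVal (S A B : Type*) [Fintype S] [Fintype A] [Fintype B] where
  p : S → A → B → S → ℝ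
  hp : ∀ s a b, IsDist (p s a b)
  rA : S → A → B → ℝ
  rB : S → A → B → ℝ
  gA : ℝ
  gB : ℝ
  hgA0 : 0 ≤ gA
  hgA1 : gA < 1
  hgB0 : 0 ≤ gB
  hgB1 : gB < 1
  VA : (S → A → ℝ) → (S → B → ℝ) → S → ℝ
  VB : (S → A → ℝ) → (S → B → ℝ) → S → ℝ
  hVA : ∀ f g, IsPol f → IsPol g → IsValue p rA gA f g (VA f g)
  hVB : ∀ f g, IsPol f → IsPol g → IsValue p rB gB f g (VB f g)

/-- Follower's one-step payoff `r_B(s,f_s,b) + γ_B Σ_{s'} p(s'|s,f_s,b) v_B(s')`. -/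
def qB {S A B : Type*} [Fintype S] [Fintype A] [Fintype B]
    (M : SSGVal S A B) (vB : S → ℝ) (s : S) (fs : A → ℝ) (b : B) : ℝ :=
  (∑ a, fs a * M.rB s a b) + M.gB * ∑ s', (∑ a, fs a * M.p s a b s') * vB s'

/-- Leader's one-step payoff under the follower's reaction `RB`. -/
def qA {S A B : Type*} [Fintype S] [Fintype A] [Fintype B]
    (M : SSGVal S A B) (vA : S → ℝ) (RB : S → (A → ℝ) → B) (s : S) (fs : A → ℝ) : ℝ :=
  (∑ a, fs a * M.rA s a (RB s fs)) + M.gA * ∑ s', (∑ a, fs a * M.p s a (RB s fs) s') * vA s'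

/-- One-step Bellman expectation operator for a fixed policy pair. -/
def Bell {S A B : Type*} [Fintype S] [Fintype A] [Fintype B]
    (p : S → A → B → S → ℝ) (r : S → A → B → ℝ) (γ : ℝ)
    (f : S → A → ℝ) (g : S → B → ℝ) (v : S → ℝ) (s : S) : ℝ :=
  ∑ a, ∑ b, f s a * g s b * (r s a b + γ * ∑ s', p s a b s' * v s')

lemma expand {S A : Type*} [Fintype S] [Fintype A]
    (f : A → ℝ) (X : A → ℝ) (γ : ℝ) (q : A → S → ℝ) (v : S → ℝ) :
    ∑ a, f a * (X a + γ * ∑ s', q a s' * v s')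
      = (∑ a, f a * X a) + γ * ∑ s', (∑ a, f a * q a s') * v s' := by
  have h1 : ∀ a, f a * (X a + γ * ∑ s', q a s' * v s')
      = f a * X a + ∑ s', f a * (γ * (q a s' * v s')) := by
    intro a; rw [mul_add, Finset.mul_sum, Finset.mul_sum]
  simp only [h1]
  rw [Finset.sum_add_distrib]
  congr 1
  rw [Finset.sum_comm, Finset.mul_sum]
  refine Finset.sum_congr rfl fun s' _ => ?_
  rw [Finset.sum_mul, Finset.mul_sum]
  exact Finset.sum_congr rfl fun a _ => by ring

lemma bell_eq {S A B : Type*} [Fintype S] [Fintype A] [Fintype B]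
    (p : S → A → B → S → ℝ) (r : S → A → B → ℝ) (γ : ℝ)
    (f : S → A → ℝ) (g : S → B → ℝ) (v : S → ℝ) (s : S) :
    Bell p r γ f g v s
      = ∑ b, g s b * ((∑ a, f s a * r s a b) + γ * ∑ s', (∑ a, f s a * p s a b s') * v s') := by
  rw [Bell, Finset.sum_comm]
  refine Finset.sum_congr rfl fun b _ => ?_
  rw [← expand (f s) (fun a => r s a b) γ (fun a s' => p s a b s') v, Finset.mul_sum]
  exact Finset.sum_congr rfl fun a _ => by ring

lemma bell_det {S A B : Type*} [Fintype S] [Fintype A] [Fintype B] [DecidableEq B]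
    (p : S → A → B → S → ℝ) (r : S → A → B → ℝ) (γ : ℝ)
    (f : S → A → ℝ) (h : S → B) (v : S → ℝ) (s : S) :
    Bell p r γ f (det h) v s
      = (∑ a, f s a * r s a (h s)) + γ * ∑ s', (∑ a, f s a * p s a (h s) s') * v s' := by
  rw [bell_eq]
  simp [det, ite_mul]

lemma det_pol {S B : Type*} [Fintype B] [DecidableEq B] (h : S → B) : IsPol (det h) := by
  intro s
  constructor
  · intro b; by_cases hb : b = h s <;> simp [det, hb]
  · simp [det]

lemma key {S A B : Type*} [Fintype S] [Fintype A] [Fintype B] [Nonempty S]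
    (p : S → A → B → S → ℝ) (hp : ∀ s a b, IsDist (p s a b))
    (r : S → A → B → ℝ) (γ : ℝ) (hγ0 : 0 ≤ γ) (hγ1 : γ < 1)
    (f : S → A → ℝ) (g : S → B → ℝ)
    (hf : IsPol f) (hg : IsPol g)
    (V W : S → ℝ)
    (hV : ∀ s, V s = Bell p r γ f g V s)
    (hW : ∀ s, Bell p r γ f g W s ≤ W s) :
    ∀ s, V s ≤ W s := by
  obtain ⟨s0, _, hs0⟩ := Finset.exists_mem_eq_sup' Finset.univ_nonempty (fun s : S => V s - W s)
  set Mx := Finset.univ.sup' Finset.univ_nonempty (fun s : S => V s - W s) with hMx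
  have hle : ∀ s, V s - W s ≤ Mx := fun s =>
    Finset.le_sup' (fun s => V s - W s) (Finset.mem_univ s)
  have hdiff : ∀ s : S, Bell p r γ f g V s - Bell p r γ f g W s ≤ γ * Mx := by
    intro s
    have e : Bell p r γ f g V s - Bell p r γ f g W s
        = ∑ a, ∑ b, f s a * g s b * (γ * ∑ s', p s a b s' * (V s' - W s')) := by
      rw [Bell, Bell, ← Finset.sum_sub_distrib]
      refine Finset.sum_congr rfl fun a _ => ?_
      rw [← Finset.sum_sub_distrib]
      refine Finset.sum_congr rfl fun b _ => ?_
      have : ∑ s', p s a b s' * (V s' - W s')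
          = (∑ s', p s a b s' * V s') - ∑ s', p s a b s' * W s' := by
        rw [← Finset.sum_sub_distrib]
        exact Finset.sum_congr rfl fun s' _ => by ring
      rw [this]; ring
    rw [e]
    have hconst : ∑ a, ∑ b, f s a * g s b * (γ * Mx) = γ * Mx := by
      have h1 : ∀ a, ∑ b, f s a * g s b * (γ * Mx) = f s a * (γ * Mx) := by
        intro a
        have : ∀ b, f s a * g s b * (γ * Mx) = g s b * (f s a * (γ * Mx)) := fun b => by ring
        simp only [this]
        rw [← Finset.sum_mul, (hg s).2, one_mul]
      simp only [h1]
      rw [← Finset.sum_mul, (hf s).2, one_mul]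
    calc ∑ a, ∑ b, f s a * g s b * (γ * ∑ s', p s a b s' * (V s' - W s'))
        ≤ ∑ a, ∑ b, f s a * g s b * (γ * Mx) := by
          refine Finset.sum_le_sum fun a _ => Finset.sum_le_sum fun b _ => ?_
          have hin : ∑ s', p s a b s' * (V s' - W s') ≤ Mx := by
            calc ∑ s', p s a b s' * (V s' - W s')
                ≤ ∑ s', p s a b s' * Mx :=
                  Finset.sum_le_sum fun s' _ =>
                    mul_le_mul_of_nonneg_left (hle s') ((hp s a b).1 s')
              _ = Mx := by rw [← Finset.sum_mul, (hp s a b).2, one_mul]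
          exact mul_le_mul_of_nonneg_left (mul_le_mul_of_nonneg_left hin hγ0)
            (mul_nonneg ((hf s).1 a) ((hg s).1 b))
      _ = γ * Mx := hconst
  have hM0 : Mx ≤ 0 := by
    have h1 : Mx ≤ γ * Mx := by
      calc Mx = V s0 - W s0 := hs0
        _ ≤ Bell p r γ f g V s0 - Bell p r γ f g W s0 := by linarith [hW s0, hV s0]
        _ ≤ γ * Mx := hdiff s0
    nlinarith
  intro s; linarith [hle s]

theorem stmt2 {S A B : Type*} [Fintype S] [Fintype A] [Fintype B]
    [Nonempty S] [Nonempty A] [Nonempty B] [DecidableEq B]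
    (M : SSGVal S A B) (VA0 VB0 : S → ℝ)
    (RB : S → (A → ℝ) → B)
    (hRB : ∀ s fs, IsDist fs → ∀ b, qB M VB0 s fs b ≤ qB M VB0 s fs (RB s fs))
    (hRBu : ∀ s fs, IsDist fs → ∀ b,
      (∀ b', qB M VB0 s fs b' ≤ qB M VB0 s fs b) → b = RB s fs)
    (fstar : S → A → ℝ) (hfstarPol : IsPol fstar)
    (hfstar : ∀ s fs, IsDist fs → qA M VA0 RB s fs ≤ qA M VA0 RB s (fstar s))
    (hfixA : ∀ s, VA0 s = qA M VA0 RB s (fstar s))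
    (hfixB : ∀ s, VB0 s = qB M VB0 s (fstar s) (RB s (fstar s))) :
    ((∀ f, IsPol f → ∀ s, M.VA f (det (fun s' => RB s' (f s'))) s ≤ VA0 s) ∧
      (∃ f, IsPol f ∧ ∀ s, M.VA f (det (fun s' => RB s' (f s'))) s = VA0 s)) ∧
    ((∀ g, IsPol g → ∀ s, M.VB fstar g s ≤ VB0 s) ∧
      (∃ g, IsPol g ∧ ∀ s, M.VB fstar g s = VB0 s)) := by
  -- Part A, inequality for any leader policy f
  have hAineq : ∀ f, IsPol f → ∀ s, M.VA f (det (fun s' => RB s' (f s'))) s ≤ VA0 s := by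
    intro f hf
    refine key M.p M.hp M.rA M.gA M.hgA0 M.hgA1 f (det (fun s' => RB s' (f s'))) hf
      (det_pol _) _ VA0 (M.hVA f _ hf (det_pol _)) ?_
    intro s
    rw [bell_det]
    calc (∑ a, f s a * M.rA s a (RB s (f s)))
          + M.gA * ∑ s', (∑ a, f s a * M.p s a (RB s (f s)) s') * VA0 s'
        = qA M VA0 RB s (f s) := rfl
      _ ≤ qA M VA0 RB s (fstar s) := hfstar s (f s) (hf s)
      _ = VA0 s := (hfixA s).symm
  -- Bell for (fstar, det(RB∘fstar)) fixes VA0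
  have hAfix : ∀ s, VA0 s
      = Bell M.p M.rA M.gA fstar (det (fun s' => RB s' (fstar s'))) VA0 s := by
    intro s
    rw [bell_det]
    exact hfixA s
  have hAeq : ∀ s, M.VA fstar (det (fun s' => RB s' (fstar s'))) s = VA0 s := by
    intro s
    refine le_antisymm (hAineq fstar hfstarPol s) ?_
    refine key M.p M.hp M.rA M.gA M.hgA0 M.hgA1 fstar (det (fun s' => RB s' (fstar s')))
      hfstarPol (det_pol _) VA0 _ hAfix (fun s' => le_of_eq
        (M.hVA fstar _ hfstarPol (det_pol _) s').symm) s
  -- Part B, inequality for any follower policy g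
  have hBineq : ∀ g, IsPol g → ∀ s, M.VB fstar g s ≤ VB0 s := by
    intro g hg
    refine key M.p M.hp M.rB M.gB M.hgB0 M.hgB1 fstar g hfstarPol hg _ VB0
      (M.hVB fstar g hfstarPol hg) ?_
    intro s
    rw [bell_eq]
    calc ∑ b, g s b * ((∑ a, fstar s a * M.rB s a b)
            + M.gB * ∑ s', (∑ a, fstar s a * M.p s a b s') * VB0 s')
        = ∑ b, g s b * qB M VB0 s (fstar s) b := rfl
      _ ≤ ∑ b, g s b * qB M VB0 s (fstar s) (RB s (fstar s)) :=
          Finset.sum_le_sum fun b _ =>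
            mul_le_mul_of_nonneg_left (hRB s (fstar s) (hfstarPol s) b) ((hg s).1 b)
      _ = qB M VB0 s (fstar s) (RB s (fstar s)) := by
          rw [← Finset.sum_mul, (hg s).2, one_mul]
      _ = VB0 s := (hfixB s).symm
  have hBfix : ∀ s, VB0 s
      = Bell M.p M.rB M.gB fstar (det (fun s' => RB s' (fstar s'))) VB0 s := by
    intro s
    rw [bell_det]
    exact hfixB s
  have hBeq : ∀ s, M.VB fstar (det (fun s' => RB s' (fstar s'))) s = VB0 s := by
    intro s
    refine le_antisymm (hBineq _ (det_pol _) s) ?_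
    refine key M.p M.hp M.rB M.gB M.hgB0 M.hgB1 fstar (det (fun s' => RB s' (fstar s')))
      hfstarPol (det_pol _) VB0 _ hBfix (fun s' => le_of_eq
        (M.hVB fstar _ hfstarPol (det_pol _) s').symm) s
  exact ⟨⟨hAineq, fstar, hfstarPol, hAeq⟩, hBineq, det (fun s' => RB s' (fstar s')), det_pol _, hBeq⟩
end

section
/- Consider an SSG with the best-response follower and the sets 𝒱, cl 𝒱, 𝒫𝒱 and the SE value function V_A^*(s) = sup_f V_A^{f†}(s). Then V_A^* ∈ 𝒫𝒱 if and only if 𝒫𝒱 is a singleton. Consequently, an SSE policy (a leader policy f* with V_A^{f*†}(s) = V_A^*(s) for all s ∈ S) exists if and only if 𝒫𝒱 is a singleton and 𝒫𝒱 ⊆ 𝒱. -/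
open Finset

/-- An SSG with a best-response follower: `Rstar f` is the unique deterministic
best response of the follower to the leader policy `f`. -/
structure Setup (S A B : Type*) [Fintype S] [Fintype A] [Fintype B] [DecidableEq B]
    extends SSGVal S A B where
  Rstar : (S → A → ℝ) → S → B
  hRstar : ∀ f, IsPol f → ∀ g, IsPol g → ∀ s, VB f g s ≤ VB f (det (Rstar f)) s
  hRstarU : ∀ f, IsPol f → ∀ h : S → B,
      (∀ g, IsPol g → ∀ s, VB f g s ≤ VB f (det h) s) → h = Rstar f

namespace Setup

variable {S A B : Type*} [Fintype S] [Fintype A] [Fintype B] [DecidableEq B]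

/-- `V_A^{f†}`: the leader's value under the best-response follower. -/
noncomputable def VAdag (M : Setup S A B) (f : S → A → ℝ) : S → ℝ :=
  M.VA f (det (M.Rstar f))

/-- Marginalized leader reward `r_A(s, f(s), b)`. -/
def rAf (M : Setup S A B) (f : S → A → ℝ) (s : S) (b : B) : ℝ :=
  ∑ a, f s a * M.rA s a b

/-- Marginalized transition `p(s' | s, f(s), b)`. -/
def pf (M : Setup S A B) (f : S → A → ℝ) (s : S) (b : B) (s' : S) : ℝ :=
  ∑ a, f s a * M.p s a b s'

/-- `Q_A^{f'†}(s, f)`. -/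
noncomputable def Q (M : Setup S A B) (f' f : S → A → ℝ) (s : S) : ℝ :=
  M.rAf f s (M.Rstar f s) + M.gA * ∑ s', M.pf f s (M.Rstar f s) s' * M.VAdag f' s'

/-- `𝒱`: the set of reachable leader value functions under the best-response follower. -/
def Vset (M : Setup S A B) : Set (S → ℝ) := {v | ∃ f, IsPol f ∧ v = M.VAdag f}

/-- `𝒫𝒱`: the set of Pareto-optimal value functions in `cl 𝒱`. -/
def PV (M : Setup S A B) : Set (S → ℝ) :=
  {v | v ∈ closure M.Vset ∧ ¬ ∃ w ∈ closure M.Vset, SDom w v}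

/-- `W_≽(f')`: policies satisfying the policy-improvement condition from `f'`. -/
noncomputable def Wge (M : Setup S A B) (f' : S → A → ℝ) : Set (S → A → ℝ) :=
  {f | IsPol f ∧ ∀ s, M.VAdag f' s ≤ M.Q f' f s}

/-- `W_{1-ε}(f')`: ε-optimal improving policies for the scalarization `L`. -/
noncomputable def Weps (M : Setup S A B) (L : (S → ℝ) → ℝ) (ε : ℝ) (f' : S → A → ℝ) :
    Set (S → A → ℝ) :=
  {f | f ∈ M.Wge f' ∧
    (1 - ε) * sSup ((fun h => L (M.Q f' h) - L (M.VAdag f')) '' M.Wge f')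
      ≤ L (M.Q f' f) - L (M.VAdag f')}

end Setup


section Aux

variable {S A B : Type*} [Fintype S] [Fintype A] [Fintype B] [DecidableEq B]
  [Nonempty S] [Nonempty A] [Nonempty B]

lemma isPol_det (g : S → B) : IsPol (det g) := by
  intro s
  constructor
  · intro b
    unfold det
    split_ifs <;> norm_num
  · simp [det]

lemma exists_isPol : ∃ f : S → A → ℝ, IsPol f := by
  refine ⟨fun _ _ => (Fintype.card A : ℝ)⁻¹, fun s => ⟨fun a => by positivity, ?_⟩⟩
  rw [Finset.sum_const, Finset.card_univ, nsmul_eq_mul]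
  exact mul_inv_cancel₀ (Nat.cast_ne_zero.2 Fintype.card_ne_zero)

lemma Setup.abs_VA_le (M : Setup S A B) :
    ∃ C, 0 ≤ C ∧ ∀ f g, IsPol f → IsPol g → ∀ s, |M.VA f g s| ≤ C := by
  set R : ℝ := Finset.univ.sup' Finset.univ_nonempty
      (fun x : S × A × B => |M.rA x.1 x.2.1 x.2.2|) with hR
  have h1γ : 0 < 1 - M.gA := by linarith [M.hgA1]
  have hR0 : 0 ≤ R := by
    obtain ⟨x⟩ : Nonempty (S × A × B) := inferInstance
    refine (abs_nonneg (M.rA x.1 x.2.1 x.2.2)).trans ?_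
    rw [hR]
    exact Finset.le_sup' (fun x : S × A × B => |M.rA x.1 x.2.1 x.2.2|) (Finset.mem_univ x)
  refine ⟨R / (1 - M.gA), by positivity, ?_⟩
  intro f g hf hg
  have hV := M.hVA f g hf hg
  set V := M.VA f g with hVdef
  obtain ⟨s₀, _, hs₀⟩ := Finset.exists_max_image Finset.univ (fun s => |V s|)
    Finset.univ_nonempty
  have hK : ∀ s, |V s| ≤ |V s₀| := fun s => hs₀ s (Finset.mem_univ s)
  set K := |V s₀| with hKdef
  have hRK : ∀ a b, |M.rA s₀ a b + M.gA * ∑ s', M.p s₀ a b s' * V s'| ≤ R + M.gA * K := by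
    intro a b
    have h1 : |M.rA s₀ a b| ≤ R := by
      rw [hR]
      exact Finset.le_sup' (fun x : S × A × B => |M.rA x.1 x.2.1 x.2.2|) (Finset.mem_univ (s₀, a, b))
    have h2 : |∑ s', M.p s₀ a b s' * V s'| ≤ K := by
      calc |∑ s', M.p s₀ a b s' * V s'| ≤ ∑ s', |M.p s₀ a b s' * V s'| :=
            Finset.abs_sum_le_sum_abs _ _
        _ ≤ ∑ s', M.p s₀ a b s' * K := by
            refine Finset.sum_le_sum fun s' _ => ?_
            rw [abs_mul, abs_of_nonneg ((M.hp s₀ a b).1 s')]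
            exact mul_le_mul_of_nonneg_left (hK s') ((M.hp s₀ a b).1 s')
        _ = K := by rw [← Finset.sum_mul, (M.hp s₀ a b).2, one_mul]
    calc |M.rA s₀ a b + M.gA * ∑ s', M.p s₀ a b s' * V s'|
        ≤ |M.rA s₀ a b| + |M.gA * ∑ s', M.p s₀ a b s' * V s'| := abs_add_le _ _
      _ ≤ R + M.gA * K := by
          rw [abs_mul, abs_of_nonneg M.hgA0]
          exact add_le_add h1 (mul_le_mul_of_nonneg_left h2 M.hgA0)
  have hmain : K ≤ R + M.gA * K := by
    calc K = |∑ a, ∑ b, f s₀ a * g s₀ b *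
          (M.rA s₀ a b + M.gA * ∑ s', M.p s₀ a b s' * V s')| := by rw [hKdef, hV s₀]
      _ ≤ ∑ a, ∑ b, |f s₀ a * g s₀ b *
          (M.rA s₀ a b + M.gA * ∑ s', M.p s₀ a b s' * V s')| :=
          (Finset.abs_sum_le_sum_abs _ _).trans
            (Finset.sum_le_sum fun a _ => Finset.abs_sum_le_sum_abs _ _)
      _ ≤ ∑ a, ∑ b, f s₀ a * g s₀ b * (R + M.gA * K) := by
          refine Finset.sum_le_sum fun a _ => Finset.sum_le_sum fun b _ => ?_
          rw [abs_mul, abs_mul, abs_of_nonneg ((hf s₀).1 a), abs_of_nonneg ((hg s₀).1 b)]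
          exact mul_le_mul_of_nonneg_left (hRK a b)
            (mul_nonneg ((hf s₀).1 a) ((hg s₀).1 b))
      _ = R + M.gA * K := by
          have hb : ∀ a, (∑ b, f s₀ a * g s₀ b * (R + M.gA * K))
              = f s₀ a * (R + M.gA * K) := by
            intro a
            have : (∑ b, f s₀ a * g s₀ b * (R + M.gA * K))
                = (f s₀ a * (R + M.gA * K)) * ∑ b, g s₀ b := by
              rw [Finset.mul_sum]
              exact Finset.sum_congr rfl fun b _ => by ring
            rw [this, (hg s₀).2, mul_one]
          rw [Finset.sum_congr rfl fun a _ => hb a, ← Finset.sum_mul, (hf s₀).2, one_mul]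
  intro s
  rw [le_div_iff₀ h1γ]
  have h2 := mul_le_mul_of_nonneg_right (hK s) h1γ.le
  nlinarith [h2, hmain]

lemma Setup.abs_VAdag_le (M : Setup S A B) :
    ∃ C, 0 ≤ C ∧ ∀ f, IsPol f → ∀ s, |M.VAdag f s| ≤ C := by
  obtain ⟨C, hC0, hC⟩ := M.abs_VA_le
  exact ⟨C, hC0, fun f hf s => hC f _ hf (isPol_det _) s⟩

lemma Setup.vset_nonempty (M : Setup S A B) : M.Vset.Nonempty := by
  obtain ⟨f, hf⟩ := exists_isPol (S := S) (A := A)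
  exact ⟨M.VAdag f, f, hf, rfl⟩

lemma Setup.vset_bounded (M : Setup S A B) : Bornology.IsBounded M.Vset := by
  obtain ⟨C, hC0, hC⟩ := M.abs_VAdag_le
  refine Metric.isBounded_closedBall.subset (?_ : _ ⊆ Metric.closedBall (0 : S → ℝ) C)
  rintro v ⟨f, hf, rfl⟩
  rw [Metric.mem_closedBall, dist_zero_right]
  exact (pi_norm_le_iff_of_nonneg hC0).2 fun s => by
    rw [Real.norm_eq_abs]; exact hC f hf s

/-- Every element of `cl 𝒱` is dominated by a Pareto-optimal value function. -/
lemma Setup.exists_po_dom (M : Setup S A B) {v : S → ℝ} (hv : v ∈ closure M.Vset) :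
    ∃ w ∈ M.PV, DomGE w v := by
  have hclD : IsClosed {w : S → ℝ | DomGE w v} := by
    have : {w : S → ℝ | DomGE w v} = ⋂ s, {w : S → ℝ | v s ≤ w s} := by
      ext w; simp [DomGE, Set.mem_iInter]
    rw [this]
    exact isClosed_iInter fun s => isClosed_le continuous_const (continuous_apply s)
  set D : Set (S → ℝ) := closure M.Vset ∩ {w | DomGE w v} with hD
  have hDcomp : IsCompact D :=
    Metric.isCompact_of_isClosed_isBounded (isClosed_closure.inter hclD)
      (M.vset_bounded.closure.subset Set.inter_subset_left)
  have hDne : D.Nonempty := ⟨v, hv, fun s => le_refl _⟩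
  have hφ : ContinuousOn (fun w : S → ℝ => ∑ s, w s) D :=
    (continuous_finset_sum _ fun s _ => continuous_apply s).continuousOn
  obtain ⟨w, hwD, hwmax⟩ := hDcomp.exists_isMaxOn hDne hφ
  refine ⟨w, ⟨hwD.1, ?_⟩, hwD.2⟩
  rintro ⟨u, hu, hdom, hne⟩
  have hlt : ∃ s, w s < u s := by
    by_contra h
    push_neg at h
    exact hne (funext fun s => le_antisymm (h s) (hdom s))
  obtain ⟨s, hs⟩ := hlt
  have huD : u ∈ D := ⟨hu, fun s' => (hwD.2 s').trans (hdom s')⟩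
  have : (∑ s', w s') < ∑ s', u s' :=
    Finset.sum_lt_sum (fun i _ => hdom i) ⟨s, Finset.mem_univ s, hs⟩
  exact absurd (hwmax huD) (not_le.2 this)

lemma Setup.le_VAstar (M : Setup S A B) (VAstar : S → ℝ)
    (hVAstar : ∀ s, VAstar s = sSup {x | ∃ f, IsPol f ∧ x = M.VAdag f s}) :
    ∀ w ∈ closure M.Vset, ∀ s, w s ≤ VAstar s := by
  obtain ⟨C, hC0, hC⟩ := M.abs_VAdag_le
  have hbdd : ∀ s, BddAbove {x | ∃ f, IsPol f ∧ x = M.VAdag f s} := by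
    intro s
    refine ⟨C, ?_⟩
    rintro x ⟨f, hf, rfl⟩
    exact (le_abs_self _).trans (hC f hf s)
  have hsub : M.Vset ⊆ {w | ∀ s, w s ≤ VAstar s} := by
    rintro w ⟨f, hf, rfl⟩ s
    rw [hVAstar s]
    exact le_csSup (hbdd s) ⟨f, hf, rfl⟩
  have hcl : IsClosed {w : S → ℝ | ∀ s, w s ≤ VAstar s} := by
    have : {w : S → ℝ | ∀ s, w s ≤ VAstar s} = ⋂ s, {w : S → ℝ | w s ≤ VAstar s} := by
      ext w; simp [Set.mem_iInter]
    rw [this]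
    exact isClosed_iInter fun s => isClosed_le (continuous_apply s) continuous_const
  exact fun w hw => closure_minimal hsub hcl hw

lemma Setup.PV_singleton_eq (M : Setup S A B) (VAstar : S → ℝ)
    (hVAstar : ∀ s, VAstar s = sSup {x | ∃ f, IsPol f ∧ x = M.VAdag f s})
    {v : S → ℝ} (h : M.PV = {v}) : v = VAstar := by
  have hvPV : v ∈ M.PV := by rw [h]; exact rfl
  obtain ⟨f₀, hf₀⟩ := exists_isPol (S := S) (A := A)
  funext s
  refine le_antisymm (M.le_VAstar VAstar hVAstar v hvPV.1 s) ?_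
  rw [hVAstar s]
  refine csSup_le ⟨M.VAdag f₀ s, f₀, hf₀, rfl⟩ ?_
  rintro x ⟨f, hf, rfl⟩
  obtain ⟨w, hwPV, hdom⟩ := M.exists_po_dom (subset_closure ⟨f, hf, rfl⟩)
  have hwv : w = v := by rw [h] at hwPV; exact hwPV
  exact (hdom s).trans (le_of_eq (congrFun hwv s))

end Aux

theorem stmt4 {S A B : Type*} [Fintype S] [Fintype A] [Fintype B]
    [Nonempty S] [Nonempty A] [Nonempty B] [DecidableEq B]
    (M : Setup S A B) (VAstar : S → ℝ)
    (hVAstar : ∀ s, VAstar s = sSup {x | ∃ f, IsPol f ∧ x = M.VAdag f s}) :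
    (VAstar ∈ M.PV ↔ ∃ v, M.PV = {v}) ∧
    ((∃ f, IsPol f ∧ ∀ s, M.VAdag f s = VAstar s) ↔
      ((∃ v, M.PV = {v}) ∧ M.PV ⊆ M.Vset)) := by
  have hub := M.le_VAstar VAstar hVAstar
  have key : VAstar ∈ M.PV → M.PV = {VAstar} := by
    intro h
    ext w
    simp only [Set.mem_singleton_iff]
    constructor
    · intro hw
      by_contra hne
      exact hw.2 ⟨VAstar, h.1, fun s => hub w hw.1 s, fun he => hne (he ▸ rfl)⟩
    · rintro rfl; exact h
  constructor
  · constructor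
    · intro h; exact ⟨VAstar, key h⟩
    · rintro ⟨v, hv⟩
      have hve := M.PV_singleton_eq VAstar hVAstar hv
      rw [← hve, hv]
      exact rfl
  · constructor
    · rintro ⟨f, hf, hfeq⟩
      have hmem : VAstar ∈ M.Vset := ⟨f, hf, (funext hfeq).symm⟩
      have hPVmem : VAstar ∈ M.PV := by
        refine ⟨subset_closure hmem, ?_⟩
        rintro ⟨w, hw, hdom, hne⟩
        exact hne (funext fun s => le_antisymm (hub w hw s) (hdom s))
      have hsing := key hPVmem
      refine ⟨⟨VAstar, hsing⟩, ?_⟩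
      rw [hsing]
      intro w hw
      rw [Set.mem_singleton_iff] at hw
      rw [hw]
      exact hmem
    · rintro ⟨⟨v, hv⟩, hsub⟩
      have hveq := M.PV_singleton_eq VAstar hVAstar hv
      have hvPV : v ∈ M.PV := by rw [hv]; exact rfl
      have hmem : VAstar ∈ M.Vset := hsub (hveq ▸ hvPV)
      obtain ⟨f, hf, heq⟩ := hmem
      exact ⟨f, hf, fun s => (congrFun heq s).symm⟩
end

section
/- Consider an SSG with the best-response follower. Let f, f' be leader policies and Q_A^{f'†}(s, f) := r_A(s, f(s), R_B^*(s,f)) + γ_A Σ_{s'} p(s'|s, f(s), R_B^*(s,f)) V_A^{f'†}(s'). If Q_A^{f'†}(s, f) ≥ V_A^{f'†}(s) for all s ∈ S, then V_A^{f†}(s) ≥ Q_A^{f'†}(s, f) ≥ V_A^{f'†}(s) for all s ∈ S. -/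
open Finset

lemma detIsPol {S B : Type*} [Fintype B] [DecidableEq B] (g : S → B) :
    IsPol (det g) := by
  intro s
  constructor
  · intro b; unfold det; split <;> norm_num
  · simp [det]

lemma bellman_det {S A B : Type*} [Fintype S] [Fintype A] [Fintype B] [DecidableEq B]
    (M : Setup.{_,_,_} S A B) (f : S → A → ℝ) (hf : IsPol f) (g : S → B) (s : S) :
    M.VA f (det g) s
      = M.rAf f s (g s)
        + M.gA * ∑ s', M.pf f s (g s) s' * M.VA f (det g) s' := by
  have hb := M.hVA f (det g) hf (detIsPol g) s
  rw [hb]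
  simp only [det, mul_ite, mul_one, mul_zero, ite_mul, zero_mul,
    Finset.sum_ite_eq', Finset.mem_univ, if_true]
  unfold Setup.rAf Setup.pf
  have e : ∑ s', (∑ a, f s a * M.p s a (g s) s') * M.VA f (det g) s'
      = ∑ a, ∑ s', f s a * M.p s a (g s) s' * M.VA f (det g) s' := by
    rw [Finset.sum_comm]
    exact Finset.sum_congr rfl fun s' _ => by rw [Finset.sum_mul]
  rw [e, Finset.mul_sum, ← Finset.sum_add_distrib]
  refine Finset.sum_congr rfl fun a _ => ?_
  rw [Finset.mul_sum, mul_add, Finset.mul_sum, Finset.mul_sum]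
  congr 1
  exact Finset.sum_congr rfl fun s' _ => by ring

lemma pf_dist {S A B : Type*} [Fintype S] [Fintype A] [Fintype B] [DecidableEq B]
    (M : Setup.{_,_,_} S A B) (f : S → A → ℝ) (hf : IsPol f) (s : S) (b : B) :
    IsDist (M.pf f s b) := by
  constructor
  · intro s'
    exact Finset.sum_nonneg fun a _ =>
      mul_nonneg ((hf s).1 a) ((M.hp s a b).1 s')
  · unfold Setup.pf
    rw [Finset.sum_comm]
    calc ∑ a, ∑ s', f s a * M.p s a b s' = ∑ a, f s a := by
          refine Finset.sum_congr rfl fun a _ => ?_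
          rw [← Finset.mul_sum, (M.hp s a b).2, mul_one]
      _ = 1 := (hf s).2

theorem stmt8 {S A B : Type*} [Fintype S] [Fintype A] [Fintype B]
    [Nonempty S] [Nonempty A] [Nonempty B] [DecidableEq B]
    (M : Setup S A B)
    (f f' : S → A → ℝ) (hf : IsPol f) (hf' : IsPol f')
    (h : ∀ s, M.VAdag f' s ≤ M.Q f' f s) :
    ∀ s, M.VAdag f' s ≤ M.Q f' f s ∧ M.Q f' f s ≤ M.VAdag f s := by
  set D : S → ℝ := fun s => M.Q f' f s - M.VAdag f s with hD
  -- key recursion: D s = γ * ∑ pf * (VAdag f' - VAdag f)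
  have hrec : ∀ s, D s
      = M.gA * ∑ s', M.pf f s (M.Rstar f s) s' * (M.VAdag f' s' - M.VAdag f s') := by
    intro s
    have hb := bellman_det M f hf (M.Rstar f) s
    simp only [hD, Setup.Q, Setup.VAdag] at *
    rw [hb]
    have e : ∑ s', M.pf f s (M.Rstar f s) s' *
        (M.VA f' (det (M.Rstar f')) s' - M.VA f (det (M.Rstar f)) s')
        = (∑ s', M.pf f s (M.Rstar f s) s' * M.VA f' (det (M.Rstar f')) s')
          - ∑ s', M.pf f s (M.Rstar f s) s' * M.VA f (det (M.Rstar f)) s' := by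
      rw [← Finset.sum_sub_distrib]
      exact Finset.sum_congr rfl fun s' _ => by ring
    rw [e]
    ring
  -- each VAdag f' s' - VAdag f s' ≤ D s' since VAdag f' ≤ Q
  have hle : ∀ s', M.VAdag f' s' - M.VAdag f s' ≤ D s' := by
    intro s'; exact sub_le_sub_right (h s') _
  obtain ⟨s0, -, hs0⟩ := Finset.exists_max_image Finset.univ D ⟨Classical.arbitrary S, Finset.mem_univ _⟩
  have hDmax : ∀ s, D s ≤ D s0 := fun s => hs0 s (Finset.mem_univ s)
  have hkey : D s0 ≤ 0 := by
    have h1 : D s0 ≤ M.gA * D s0 := by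
      calc D s0 = M.gA * ∑ s', M.pf f s0 (M.Rstar f s0) s' * (M.VAdag f' s' - M.VAdag f s') :=
            hrec s0
        _ ≤ M.gA * ∑ s', M.pf f s0 (M.Rstar f s0) s' * D s0 := by
            refine mul_le_mul_of_nonneg_left ?_ M.hgA0
            refine Finset.sum_le_sum fun s' _ => ?_
            refine mul_le_mul_of_nonneg_left ((hle s').trans (hDmax s'))
              ((pf_dist M f hf s0 (M.Rstar f s0)).1 s')
        _ = M.gA * D s0 := by
            rw [← Finset.sum_mul, (pf_dist M f hf s0 (M.Rstar f s0)).2, one_mul]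
    nlinarith [M.hgA1, M.hgA0]
  intro s
  refine ⟨h s, ?_⟩
  have : D s ≤ 0 := (hDmax s).trans hkey
  simpa [hD] using this
end

section
/- Consider an SSG with the best-response follower, a Pareto-compliant scalarization L, and ε ∈ [0,1). Let f_0 be any leader policy, let {f_t} satisfy f_{t+1} ∈ W_{1−ε}(f_t) for all t ≥ 0, set v_t := V_A^{f_t†}, and let v_∞ := lim_{t→∞} v_t (which exists). Then for every t ≥ 0: v_{t+1} = v_t if and only if v_t = v_∞. -/
open Finset

set_option linter.unusedSectionVars false
namespace Setup
variable {S A B : Type*} [Fintype S] [Fintype A] [Fintype B]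
  [Nonempty S] [Nonempty A] [Nonempty B] [DecidableEq B]

lemma isPol_det (g : S → B) : IsPol (det g) := by
  intro s
  refine ⟨fun b => ?_, by simp [det]⟩
  unfold det; positivity

lemma pf_nonneg (M : Setup S A B) {h : S → A → ℝ} (hh : IsPol h) (s : S) (b : B) (s' : S) :
    0 ≤ M.pf h s b s' :=
  Finset.sum_nonneg fun a _ => mul_nonneg ((hh s).1 a) ((M.hp s a b).1 s')

lemma pf_sum_one (M : Setup S A B) {h : S → A → ℝ} (hh : IsPol h) (s : S) (b : B) :
    ∑ s', M.pf h s b s' = 1 := by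
  unfold pf
  rw [Finset.sum_comm]
  simp only [← Finset.mul_sum]
  simp [(fun a => (M.hp s a b).2), (hh s).2]

lemma pf_avg_le (M : Setup S A B) {h : S → A → ℝ} (hh : IsPol h) (s : S) (b : B)
    {w : S → ℝ} {c : ℝ} (hw : ∀ s', w s' ≤ c) :
    ∑ s', M.pf h s b s' * w s' ≤ c := by
  calc ∑ s', M.pf h s b s' * w s' ≤ ∑ s', M.pf h s b s' * c :=
        Finset.sum_le_sum fun s' _ =>
          mul_le_mul_of_nonneg_left (hw s') (M.pf_nonneg hh s b s')
    _ = c := by rw [← Finset.sum_mul, M.pf_sum_one hh, one_mul]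

lemma bellman (M : Setup S A B) (h : S → A → ℝ) (hh : IsPol h) (s : S) :
    M.VAdag h s = M.rAf h s (M.Rstar h s)
      + M.gA * ∑ s', M.pf h s (M.Rstar h s) s' * M.VAdag h s' := by
  have hb := M.hVA h (det (M.Rstar h)) hh (isPol_det _) s
  unfold VAdag rAf pf
  rw [show M.VA h (det (M.Rstar h)) s = _ from hb]
  simp only [det, mul_ite, ite_mul, mul_one, mul_zero, zero_mul, one_mul,
    Finset.sum_ite_eq', Finset.mem_univ, if_true]
  rw [Finset.sum_congr rfl (fun a _ => mul_add (h s a) _ _), Finset.sum_add_distrib]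
  congr 1
  simp only [Finset.mul_sum, Finset.sum_mul]
  rw [Finset.sum_comm]
  exact Finset.sum_congr rfl fun s' _ => Finset.sum_congr rfl fun a _ => by ring

lemma Q_self (M : Setup S A B) (h : S → A → ℝ) (hh : IsPol h) :
    M.Q h h = M.VAdag h := by
  funext s; exact (M.bellman h hh s).symm

/-- Comparison: if `v ≤ T_f v` then `v ≤ V_A^{f†}` and `T_f v ≤ V_A^{f†}`. -/
lemma le_VAdag (M : Setup S A B) (h : S → A → ℝ) (hh : IsPol h) (v : S → ℝ)
    (hv : ∀ s, v s ≤ M.rAf h s (M.Rstar h s) + M.gA * ∑ s', M.pf h s (M.Rstar h s) s' * v s') :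
    (∀ s, v s ≤ M.VAdag h s) ∧
    (∀ s, M.rAf h s (M.Rstar h s) + M.gA * ∑ s', M.pf h s (M.Rstar h s) s' * v s'
        ≤ M.VAdag h s) := by
  set u := M.VAdag h with hu
  have hne : (Finset.univ : Finset S).Nonempty := Finset.univ_nonempty
  set d := Finset.univ.sup' hne (fun s => v s - u s) with hd
  have hdle : ∀ s, v s - u s ≤ d := fun s => Finset.le_sup' (fun s => v s - u s) (Finset.mem_univ s)
  have key : ∀ s, v s - u s ≤ M.gA * d := by
    intro s
    have h1 := hv s
    have h2 := M.bellman h hh s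
    have h3 : ∑ s', M.pf h s (M.Rstar h s) s' * v s'
        - ∑ s', M.pf h s (M.Rstar h s) s' * u s'
        = ∑ s', M.pf h s (M.Rstar h s) s' * (v s' - u s') := by
      rw [← Finset.sum_sub_distrib]; congr 1; ext s'; ring
    have h4 : ∑ s', M.pf h s (M.Rstar h s) s' * (v s' - u s') ≤ d :=
      M.pf_avg_le hh s _ (fun s' => hdle s')
    nlinarith [M.hgA0]
  have hd0 : d ≤ 0 := by
    obtain ⟨s0, _, hs0⟩ := Finset.exists_mem_eq_sup' hne (fun s => v s - u s)
    have := key s0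
    rw [← hs0] at this
    nlinarith [M.hgA1]
  have hvu : ∀ s, v s ≤ u s := fun s => by
    have := hdle s; have := hd0; linarith
  refine ⟨hvu, fun s => ?_⟩
  have h2 := M.bellman h hh s
  have h4 : ∑ s', M.pf h s (M.Rstar h s) s' * (v s' - u s') ≤ 0 :=
    M.pf_avg_le hh s _ (fun s' => by linarith [hvu s'])
  have h3 : ∑ s', M.pf h s (M.Rstar h s) s' * v s'
      - ∑ s', M.pf h s (M.Rstar h s) s' * u s'
      = ∑ s', M.pf h s (M.Rstar h s) s' * (v s' - u s') := by
    rw [← Finset.sum_sub_distrib]; congr 1; ext s'; ring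
  nlinarith [M.hgA0]

lemma VAdag_le (M : Setup S A B) (h : S → A → ℝ) (hh : IsPol h) (v : S → ℝ)
    (hv : ∀ s, M.rAf h s (M.Rstar h s) + M.gA * ∑ s', M.pf h s (M.Rstar h s) s' * v s' ≤ v s) :
    ∀ s, M.VAdag h s ≤ v s := by
  set u := M.VAdag h with hu
  have hne : (Finset.univ : Finset S).Nonempty := Finset.univ_nonempty
  set d := Finset.univ.sup' hne (fun s => u s - v s) with hd
  have hdle : ∀ s, u s - v s ≤ d := fun s => Finset.le_sup' (fun s => u s - v s) (Finset.mem_univ s)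
  have key : ∀ s, u s - v s ≤ M.gA * d := by
    intro s
    have h1 := hv s
    have h2 := M.bellman h hh s
    have h3 : ∑ s', M.pf h s (M.Rstar h s) s' * u s'
        - ∑ s', M.pf h s (M.Rstar h s) s' * v s'
        = ∑ s', M.pf h s (M.Rstar h s) s' * (u s' - v s') := by
      rw [← Finset.sum_sub_distrib]; congr 1; ext s'; ring
    have h4 : ∑ s', M.pf h s (M.Rstar h s) s' * (u s' - v s') ≤ d :=
      M.pf_avg_le hh s _ (fun s' => hdle s')
    nlinarith [M.hgA0]
  have hd0 : d ≤ 0 := by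
    obtain ⟨s0, _, hs0⟩ := Finset.exists_mem_eq_sup' hne (fun s => u s - v s)
    have := key s0
    rw [← hs0] at this
    nlinarith [M.hgA1]
  intro s; have := hdle s; linarith

lemma fixed_eq_VAdag (M : Setup S A B) (h : S → A → ℝ) (hh : IsPol h) (v : S → ℝ)
    (hv : ∀ s, v s = M.rAf h s (M.Rstar h s) + M.gA * ∑ s', M.pf h s (M.Rstar h s) s' * v s') :
    v = M.VAdag h := by
  funext s
  exact le_antisymm ((M.le_VAdag h hh v (fun s => (hv s).le)).1 s)
    (M.VAdag_le h hh v (fun s => (hv s).ge) s)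

/-- Policy improvement across `Wge`. -/
lemma wge_le (M : Setup S A B) (f' h : S → A → ℝ) (hmem : h ∈ M.Wge f') :
    (∀ s, M.VAdag f' s ≤ M.Q f' h s) ∧ (∀ s, M.Q f' h s ≤ M.VAdag h s) := by
  obtain ⟨hh, hge⟩ := hmem
  refine ⟨hge, fun s => ?_⟩
  exact (M.le_VAdag h hh (M.VAdag f') (fun s => hge s)).2 s

end Setup

lemma dist_avg_abs_le {α : Type*} [Fintype α] (d : α → ℝ) (hd : IsDist d)
    (w : α → ℝ) {c : ℝ} (hw : ∀ a, |w a| ≤ c) : |∑ a, d a * w a| ≤ c := by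
  calc |∑ a, d a * w a| ≤ ∑ a, |d a * w a| := Finset.abs_sum_le_sum_abs _ _
    _ ≤ ∑ a, d a * c := by
        refine Finset.sum_le_sum fun a _ => ?_
        rw [abs_mul, abs_of_nonneg (hd.1 a)]
        exact mul_le_mul_of_nonneg_left (hw a) (hd.1 a)
    _ = c := by rw [← Finset.sum_mul, hd.2, one_mul]

theorem stmt16 {S A B : Type*} [Fintype S] [Fintype A] [Fintype B]
    [Nonempty S] [Nonempty A] [Nonempty B] [DecidableEq B]
    (M : Setup S A B)
    (L : (S → ℝ) → ℝ) (hLc : Continuous L)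
    (hLp : ∀ v w : S → ℝ, SDom v w → L w < L v)
    (ε : ℝ) (hε0 : 0 ≤ ε) (hε1 : ε < 1)
    (f : ℕ → S → A → ℝ) (hf0 : IsPol (f 0))
    (hstep : ∀ t, f (t + 1) ∈ M.Weps L ε (f t))
    (vinf : S → ℝ)
    (hvinf : Filter.Tendsto (fun t => M.VAdag (f t)) Filter.atTop (nhds vinf)) :
    ∀ t, M.VAdag (f (t + 1)) = M.VAdag (f t) ↔ M.VAdag (f t) = vinf := by
  have hpol : ∀ t, IsPol (f t) := by
    intro t
    cases t with
    | zero => exact hf0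
    | succ n => exact (hstep n).1.1
  have hmono : ∀ t s, M.VAdag (f t) s ≤ M.VAdag (f (t + 1)) s := by
    intro t s
    have h1 := M.wge_le (f t) (f (t + 1)) (hstep t).1
    exact (h1.1 s).trans (h1.2 s)
  have hmono' : ∀ s, Monotone fun t => M.VAdag (f t) s :=
    fun s => monotone_nat_of_le_succ fun t => hmono t s
  have hle_inf : ∀ t s, M.VAdag (f t) s ≤ vinf s := by
    intro t s
    have hts : Filter.Tendsto (fun T => M.VAdag (f T) s) Filter.atTop (nhds (vinf s)) :=
      (tendsto_pi_nhds.mp hvinf) s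
    exact ge_of_tendsto hts (Filter.eventually_atTop.mpr ⟨t, fun T hT => hmono' s hT⟩)
  have key : ∀ u : ℕ, M.VAdag (f (u + 1)) = M.VAdag (f u) →
      M.VAdag (f (u + 2)) = M.VAdag (f (u + 1)) := by
    intro u hu
    obtain ⟨⟨hp1, hge1⟩, hsup1⟩ := hstep u
    obtain ⟨⟨hp2, hge2⟩, -⟩ := hstep (u + 1)
    have hQ1 : M.Q (f u) (f (u + 1)) = M.VAdag (f u) := by
      funext s
      refine le_antisymm ?_ (hge1 s)
      exact ((M.wge_le (f u) (f (u + 1)) ⟨hp1, hge1⟩).2 s).trans (le_of_eq (congrFun hu s))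
    set D := (fun h => L (M.Q (f u) h) - L (M.VAdag (f u))) '' M.Wge (f u) with hD
    have hsupD : sSup D ≤ 0 := by
      rw [hQ1, sub_self] at hsup1
      by_contra hc
      push_neg at hc
      nlinarith
    -- bound and BddAbove
    obtain ⟨x1, hx1⟩ := Finite.exists_max fun x : S × A × B => |M.rA x.1 x.2.1 x.2.2|
    set R1 : ℝ := |M.rA x1.1 x1.2.1 x1.2.2| with hR1
    obtain ⟨s2, hs2⟩ := Finite.exists_max fun s : S => |M.VAdag (f u) s|
    set R2 : ℝ := |M.VAdag (f u) s2| with hR2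
    set K : ℝ := R1 + M.gA * R2 with hK
    have hQbound : ∀ h ∈ M.Wge (f u),
        M.Q (f u) h ∈ Set.Icc (fun _ : S => -K) (fun _ : S => K) := by
      rintro h ⟨hh, -⟩
      have habs : ∀ s, |M.Q (f u) h s| ≤ K := by
        intro s
        have h1 : |M.rAf h s (M.Rstar h s)| ≤ R1 :=
          dist_avg_abs_le (h s) (hh s) _ fun a => hx1 (s, a, M.Rstar h s)
        have h2 : |∑ s', M.pf h s (M.Rstar h s) s' * M.VAdag (f u) s'| ≤ R2 :=
          dist_avg_abs_le _ ⟨M.pf_nonneg hh s _, M.pf_sum_one hh s _⟩ _ fun s' => hs2 s'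
        calc |M.Q (f u) h s| ≤ |M.rAf h s (M.Rstar h s)|
              + |M.gA * ∑ s', M.pf h s (M.Rstar h s) s' * M.VAdag (f u) s'| := abs_add_le _ _
          _ ≤ R1 + M.gA * R2 := by
              rw [abs_mul, abs_of_nonneg M.hgA0]
              exact add_le_add h1 (mul_le_mul_of_nonneg_left h2 M.hgA0)
          _ = K := rfl
      constructor
      · intro s; exact neg_le_of_abs_le (habs s)
      · intro s; exact le_of_abs_le (habs s)
    have hBdd : BddAbove D := by
      have hc : BddAbove ((fun w => L w - L (M.VAdag (f u))) ''
          Set.Icc (fun _ : S => -K) (fun _ : S => K)) :=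
        (isCompact_Icc.image_of_continuousOn
          ((hLc.sub continuous_const).continuousOn)).bddAbove
      refine BddAbove.mono ?_ hc
      rintro x ⟨h, hh, rfl⟩
      exact ⟨_, hQbound h hh, rfl⟩
    -- membership of f (u+2) in Wge (f u)
    have hQeq : ∀ h, M.Q (f (u + 1)) h = M.Q (f u) h := by
      intro h; unfold Setup.Q; rw [hu]
    have hmem : f (u + 2) ∈ M.Wge (f u) := by
      refine ⟨hp2, fun s => ?_⟩
      have := hge2 s
      rwa [hu, hQeq] at this
    have hQ2 : M.Q (f u) (f (u + 2)) = M.VAdag (f u) := by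
      by_contra hne
      have hdom : SDom (M.Q (f u) (f (u + 2))) (M.VAdag (f u)) := ⟨hmem.2, hne⟩
      have hlt := hLp _ _ hdom
      have hin : L (M.Q (f u) (f (u + 2))) - L (M.VAdag (f u)) ∈ D :=
        ⟨f (u + 2), hmem, rfl⟩
      have := (le_csSup hBdd hin).trans hsupD
      linarith
    have hfix : M.VAdag (f u) = M.VAdag (f (u + 2)) :=
      M.fixed_eq_VAdag (f (u + 2)) hp2 (M.VAdag (f u))
        (fun s => (congrFun hQ2 s).symm)
    rw [← hfix, hu]
  intro t
  constructor
  · intro h1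
    have hsucc : ∀ k : ℕ, M.VAdag (f (t + k + 1)) = M.VAdag (f (t + k)) := by
      intro k
      induction k with
      | zero => exact h1
      | succ n ih => exact key (t + n) ih
    have hconst : ∀ k : ℕ, M.VAdag (f (t + k)) = M.VAdag (f t) := by
      intro k
      induction k with
      | zero => rfl
      | succ n ih => rw [← ih]; exact hsucc n
    have h3 : Filter.Tendsto (fun n : ℕ => M.VAdag (f (n + t))) Filter.atTop (nhds vinf) :=
      hvinf.comp (Filter.tendsto_add_atTop_nat t)
    have h4 : (fun n : ℕ => M.VAdag (f (n + t))) = fun _ => M.VAdag (f t) := by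
      funext n; rw [add_comm]; exact hconst n
    rw [h4] at h3
    exact (tendsto_nhds_unique h3 tendsto_const_nhds).symm
  · intro h2
    funext s
    refine le_antisymm ?_ (hmono t s)
    calc M.VAdag (f (t + 1)) s ≤ vinf s := hle_inf (t + 1) s
      _ = M.VAdag (f t) s := (congrFun h2 s).symm
end
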